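/- arXiv:1509.07737 — 3 statements merged into one kernel-verified Lean document; each statement's English description precedes it below -/
import Mathlib

section
/- Let A and B be C*-algebras with A separable, and let (φₙ : A → B ⊗ K)ₙ be a sequence of completely positive contractive maps that is asymptotically multiplicative (‖φₙ(ab) − φₙ(a)φₙ(b)‖ → 0 for all a, b ∈ A). Then there exists an increasing sequence of projections pₙ ∈ K converging strongly to 1 such that the compressed maps ψₙ(a) = (1 ⊗ pₙ) φₙ(a) (1 ⊗ pₙ) satisfy ‖φₙ(a) − ψₙ(a)‖ → 0 for all a ∈ A; i.e., every cpc discrete asymptotic morphism into B ⊗ K is equivalent to one taking values in matrix algebras Mₘ(ₙ)(B). -/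
open Filter Topology

/-- Algebraic positivity of a matrix over a C*-algebra. -/
def MatPos {A : Type*} [NonUnitalCStarAlgebra A] {n : ℕ}
    (m : Matrix (Fin n) (Fin n) A) : Prop := ∃ c, m = star c * c

/-- A linear map between C*-algebras is completely positive if its matrix
amplifications preserve positivity. -/
def IsCompletelyPositive {A B : Type*} [NonUnitalCStarAlgebra A]
    [NonUnitalCStarAlgebra B] (φ : A →ₗ[ℂ] B) : Prop :=
  ∀ (n : ℕ) (m : Matrix (Fin n) (Fin n) A), MatPos m →
    MatPos (fun i j => φ (m i j) : Matrix (Fin n) (Fin n) B)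

lemma my_norm_mul_three_le {D : Type*} [NonUnitalCStarAlgebra D] (a b c : D) :
    ‖a * b * c‖ ≤ ‖a‖ * ‖b‖ * ‖c‖ :=
  (norm_mul_le _ _).trans (by gcongr; exact norm_mul_le a b)

/-- Let `A` be a separable C*-algebra and let `D` be a C*-algebra playing the role of
the stabilization `B ⊗ K`:  it comes with an increasing sequence of projections
(corresponding to `1 ⊗ pₙ` with `pₙ ∈ K` finite rank) acting as an approximate unit
in the "strong" sense that compressions converge in norm on every element.
If `(φₙ : A → D)ₙ` is a completely positive contractive asymptotically multiplicative
sequence, then there is an increasing sequence of projections `qₙ` from this family,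
still converging strongly to `1`, such that the compressions
`ψₙ(a) = qₙ φₙ(a) qₙ` satisfy `‖φₙ(a) − ψₙ(a)‖ → 0` for all `a ∈ A`; i.e. the
discrete asymptotic morphism `(φₙ)` is equivalent to one taking values in the
corners `qₙ D qₙ` (the matrix algebras `M_{m(n)}(B)`). -/
theorem stmt_7 {A D : Type*} [NonUnitalCStarAlgebra A] [NonUnitalCStarAlgebra D]
    [TopologicalSpace.SeparableSpace A]
    (p : ℕ → D)
    (hproj : ∀ n, IsIdempotentElem (p n) ∧ star (p n) = p n)
    (hincr : ∀ m n, m ≤ n → p n * p m = p m ∧ p m * p n = p m)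
    (hstrong : ∀ x : D, Tendsto (fun n => ‖p n * x * p n - x‖) atTop (𝓝 0))
    (φ : ℕ → A →ₗ[ℂ] D)
    (hcp : ∀ n, IsCompletelyPositive (φ n))
    (hcontr : ∀ n a, ‖φ n a‖ ≤ ‖a‖)
    (hmult : ∀ a b : A, Tendsto (fun n => ‖φ n (a * b) - φ n a * φ n b‖) atTop (𝓝 0)) :
    ∃ q : ℕ → D,
      (∀ n, IsIdempotentElem (q n) ∧ star (q n) = q n) ∧
      (∀ m n, m ≤ n → q n * q m = q m ∧ q m * q n = q m) ∧
      (∀ x : D, Tendsto (fun n => ‖q n * x * q n - x‖) atTop (𝓝 0)) ∧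
      (∀ n, ∃ k, q n = p k) ∧
      (∀ a : A, Tendsto (fun n => ‖φ n a - q n * φ n a * q n‖) atTop (𝓝 0)) := by
  have hA : Nonempty A := ⟨0⟩
  set u := TopologicalSpace.denseSeq A with hu_def
  have hu : DenseRange u := TopologicalSpace.denseRange_denseSeq A
  -- choose cut-off indices
  have hex : ∀ n i : ℕ, ∃ N, ∀ j ≥ N,
      ‖p j * (φ n (u i)) * p j - φ n (u i)‖ < 1/(n+1) := by
    intro n i
    have hpos : (0:ℝ) < 1/(n+1) := by positivity
    obtain ⟨N, hN⟩ := Metric.tendsto_atTop.mp (hstrong (φ n (u i))) _ hpos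
    refine ⟨N, fun j hj => ?_⟩
    have := hN j hj
    rwa [Real.dist_eq, sub_zero, abs_of_nonneg (norm_nonneg _)] at this
  choose g hg using hex
  set k : ℕ → ℕ := fun n =>
    (Finset.range (n+1)).sup (fun m => (Finset.range (m+1)).sup (g m)) + n with hk_def
  have hkmono : Monotone k := by
    intro m n hmn
    simp only [hk_def]
    have := Finset.sup_mono (f := fun m => (Finset.range (m+1)).sup (g m))
      (Finset.range_subset_range.mpr (show m+1 ≤ n+1 by omega))
    omega
  have hkge : ∀ n, n ≤ k n := fun n => Nat.le_add_left n _
  have hgk : ∀ n i, i ≤ n → g n i ≤ k n := by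
    intro n i hi
    have h1 : g n i ≤ (Finset.range (n+1)).sup (g n) :=
      Finset.le_sup (Finset.mem_range.mpr (by omega))
    have h2 : (Finset.range (n+1)).sup (g n) ≤
        (Finset.range (n+1)).sup (fun m => (Finset.range (m+1)).sup (g m)) :=
      Finset.le_sup (f := fun m => (Finset.range (m+1)).sup (g m))
        (Finset.mem_range.mpr (by omega))
    exact le_trans (le_trans h1 h2) (Nat.le_add_right _ _)
  refine ⟨fun n => p (k n), fun n => hproj _, fun m n hmn => hincr _ _ (hkmono hmn),
    fun x => (hstrong x).comp (tendsto_atTop_mono hkge tendsto_id), fun n => ⟨k n, rfl⟩,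
    ?_⟩
  intro a
  rw [Metric.tendsto_atTop]
  intro ε hε
  obtain ⟨i, hi⟩ := Metric.denseRange_iff.mp hu a (ε/4) (by positivity)
  obtain ⟨N₀, hN₀⟩ := exists_nat_one_div_lt (show (0:ℝ) < ε/4 by positivity)
  refine ⟨max i N₀, fun n hn => ?_⟩
  have hni : i ≤ n := le_trans (le_max_left _ _) hn
  have hnN : N₀ ≤ n := le_trans (le_max_right _ _) hn
  have hq : ‖p (k n)‖ ≤ 1 := by
    by_contra hcon
    push_neg at hcon
    have h1 : ‖p (k n)‖ * ‖p (k n)‖ = ‖p (k n)‖ := by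
      calc ‖p (k n)‖ * ‖p (k n)‖ = ‖star (p (k n)) * p (k n)‖ :=
            (CStarRing.norm_star_mul_self).symm
        _ = ‖p (k n)‖ := by rw [(hproj (k n)).2, (hproj (k n)).1.eq]
    nlinarith [norm_nonneg (p (k n))]
  have hcomp : ‖p (k n) * φ n (u i) * p (k n) - φ n (u i)‖ < ε/4 := by
    refine lt_trans (hg n i (k n) (hgk n i hni)) ?_
    calc (1:ℝ)/(n+1) ≤ 1/(N₀+1) := by
          apply div_le_div_of_nonneg_left (by norm_num) (by positivity)
          have : (N₀:ℝ) ≤ (n:ℝ) := Nat.cast_le.mpr hnN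
          linarith
      _ < ε/4 := hN₀
  have hdiff : ‖φ n a - φ n (u i)‖ ≤ ‖a - u i‖ := by
    rw [← map_sub]; exact hcontr n _
  have hau : ‖a - u i‖ < ε/4 := by rwa [← dist_eq_norm]
  have hthird : ‖p (k n) * φ n (u i) * p (k n) - p (k n) * φ n a * p (k n)‖ < ε/4 := by
    have heq : p (k n) * φ n (u i) * p (k n) - p (k n) * φ n a * p (k n)
        = p (k n) * (φ n (u i) - φ n a) * p (k n) := by noncomm_ring
    rw [heq]
    calc ‖p (k n) * (φ n (u i) - φ n a) * p (k n)‖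
        ≤ ‖p (k n)‖ * ‖φ n (u i) - φ n a‖ * ‖p (k n)‖ := my_norm_mul_three_le _ _ _
      _ ≤ 1 * ‖φ n (u i) - φ n a‖ * 1 := by gcongr <;> exact norm_nonneg _
      _ = ‖φ n (u i) - φ n a‖ := by ring
      _ ≤ ‖a - u i‖ := by rw [norm_sub_rev]; exact hdiff
      _ < ε/4 := hau
  rw [Real.dist_eq, sub_zero, abs_of_nonneg (norm_nonneg _)]
  calc ‖φ n a - p (k n) * φ n a * p (k n)‖
      ≤ ‖φ n a - φ n (u i)‖ + ‖φ n (u i) - p (k n) * φ n (u i) * p (k n)‖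
        + ‖p (k n) * φ n (u i) * p (k n) - p (k n) * φ n a * p (k n)‖ := by
        have := dist_triangle4 (φ n a) (φ n (u i))
          (p (k n) * φ n (u i) * p (k n)) (p (k n) * φ n a * p (k n))
        simpa [dist_eq_norm] using this
    _ < ε/4 + ε/4 + ε/4 := by
        apply add_lt_add (add_lt_add_of_le_of_lt ?_ ?_) hthird
        · exact le_trans hdiff (le_of_lt hau)
        · rwa [norm_sub_rev]
    _ < ε := by linarith
end

section
/- Let A be a separable C*-algebra, (aᵢ)ᵢ a dense sequence in A, and (γₙ : A → Bₙ)ₙ a cpc discrete asymptotic morphism with limsupₙ ‖γₙ(a)‖ = ‖a‖ for all a ∈ A. Then there exist, for each i, a strictly increasing sequence (m(i,n))ₙ such that the maps γ'ₙ = γ_{m(1,n)} ⊕ γ_{m(2,n)} ⊕ ⋯ ⊕ γ_{m(n,n)} : A → B_{m(1,n)} ⊕ ⋯ ⊕ B_{m(n,n)} form a cpc discrete asymptotic morphism satisfying limₙ ‖γ'ₙ(a)‖ = ‖a‖ for all a ∈ A (limit, not just limsup). -/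
open Filter Topology

/-!
Since `limsupₖ ‖γₖ(aᵢ)‖ = ‖aᵢ‖`, each `i` admits a strictly increasing `m i` with
`‖γ_{m i n}(aᵢ)‖ > ‖aᵢ‖ - 1/(n+1)`. For `n > i` the `i`-th summand of `γ'ₙ` then almost attains
`‖aᵢ‖`, so by density and contractivity `‖γ'ₙ(x)‖ → ‖x‖`. The multiplicativity defect of `γ'ₙ`
is the largest defect of `γₖ` over indices `k = m i n ≥ n`, hence tends to `0`.
-/

theorem IsCompletelyPositive.pi {ι : Type*} [Fintype ι] {A : Type*} {B : ι → Type*}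
    [NonUnitalCStarAlgebra A] [∀ i, NonUnitalCStarAlgebra (B i)]
    {φ : ∀ i, A →ₗ[ℂ] B i} (hφ : ∀ i, IsCompletelyPositive (φ i)) :
    IsCompletelyPositive (LinearMap.pi φ) := by
  intro n M hM
  choose c hc using fun i => hφ i n M hM
  refine ⟨Matrix.of fun p q i => c i p q, ?_⟩
  ext p q i
  simp [Matrix.mul_apply, Finset.sum_apply, congrFun₂ (hc i) p q]

theorem LinearMap.norm_pi_apply_le {ι : Type*} [Fintype ι] {A : Type*} {B : ι → Type*}
    [SeminormedAddCommGroup A] [Module ℂ A] [∀ i, SeminormedAddCommGroup (B i)]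
    [∀ i, Module ℂ (B i)] {φ : ∀ i, A →ₗ[ℂ] B i} (hφ : ∀ i x, ‖φ i x‖ ≤ ‖x‖) (x : A) :
    ‖LinearMap.pi φ x‖ ≤ ‖x‖ :=
  (pi_norm_le_iff_of_nonneg (norm_nonneg x)).2 fun i => hφ i x

theorem tendsto_norm_finPi_zero {E : ℕ → Type*} [∀ k, SeminormedAddCommGroup (E k)]
    {u : ∀ k, E k} (hu : Tendsto (fun k => ‖u k‖) atTop (𝓝 0))
    {m : ℕ → ℕ → ℕ} (hm : ∀ i n, n ≤ m i n) :
    Tendsto (fun n => ‖(fun i : Fin n => u (m i n) : ∀ i : Fin n, E (m i n))‖) atTop (𝓝 0) := by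
  refine tendsto_order.2
    ⟨fun b hb => .of_forall fun n => hb.trans_le (norm_nonneg _), fun b hb => ?_⟩
  obtain ⟨ε, hε0, hεb⟩ := exists_between hb
  obtain ⟨N, hN⟩ := eventually_atTop.1 (hu.eventually (ge_mem_nhds hε0))
  filter_upwards [eventually_ge_atTop N] with n hn
  exact ((pi_norm_le_iff_of_nonneg hε0.le).2 fun i : Fin n => hN _ (hn.trans (hm i n))).trans_lt hεb

theorem exists_strictMono_lt_comp_of_lt_limsup {u : ℕ → ℝ}
    (hu : IsCoboundedUnder (· ≤ ·) atTop u) {ε : ℕ → ℝ} (hε : ∀ n, ε n < limsup u atTop) :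
    ∃ φ : ℕ → ℕ, StrictMono φ ∧ ∀ n, ε n < u (φ n) :=
  extraction_forall_of_frequently fun n => frequently_lt_of_lt_limsup hu (hε n)

theorem tendsto_norm_pi_apply_of_denseRange {A : Type*} {B : ℕ → Type*}
    [SeminormedAddCommGroup A] [Module ℂ A] [∀ k, SeminormedAddCommGroup (B k)]
    [∀ k, Module ℂ (B k)] {a : ℕ → A} (ha : DenseRange a) {γ : ∀ k, A →ₗ[ℂ] B k}
    (hγ : ∀ k x, ‖γ k x‖ ≤ ‖x‖) {m : ℕ → ℕ → ℕ}
    (hm : ∀ i n : ℕ, ‖a i‖ - 1 / (n + 1 : ℝ) < ‖γ (m i n) (a i)‖) (x : A) :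
    Tendsto (fun n => ‖LinearMap.pi (fun i : Fin n => γ (m i n)) x‖) atTop (𝓝 ‖x‖) := by
  refine tendsto_order.2 ⟨fun b hb => ?_,
    fun b hb => .of_forall fun n => (LinearMap.norm_pi_apply_le (fun _ => hγ _) x).trans_lt hb⟩
  obtain ⟨δ, hδ, hbδ⟩ : ∃ δ > 0, b + 3 * δ = ‖x‖ := ⟨(‖x‖ - b) / 3, by linarith, by ring⟩
  obtain ⟨i, hi⟩ := ha.exists_dist_lt x hδ
  have hsmall : ∀ᶠ n : ℕ in atTop, 1 / (n + 1 : ℝ) < δ :=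
    tendsto_one_div_add_atTop_nhds_zero_nat.eventually (gt_mem_nhds hδ)
  filter_upwards [eventually_gt_atTop i, hsmall] with n hin hn
  have hγ_lip : ‖γ (m i n) (a i)‖ - ‖γ (m i n) x‖ ≤ ‖a i - x‖ :=
    (norm_sub_norm_le _ _).trans (map_sub (γ (m i n)) (a i) x ▸ hγ _ _)
  calc b < ‖γ (m i n) x‖ := by
        rw [dist_eq_norm] at hi
        linarith [hm i n, norm_sub_norm_le x (a i), norm_sub_rev x (a i)]
    _ ≤ ‖LinearMap.pi (fun i : Fin n => γ (m i n)) x‖ :=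
        norm_le_pi_norm (LinearMap.pi (fun i : Fin n => γ (m i n)) x) ⟨i, hin⟩

/-- Let `A` be a separable C*-algebra, `(aᵢ)ᵢ` a dense sequence in `A`, and
`(γₙ : A → Bₙ)ₙ` a cpc discrete asymptotic morphism with
`limsupₙ ‖γₙ(a)‖ = ‖a‖` for all `a`.  Then there exist, for each `i`, a strictly
increasing sequence `(m i n)ₙ` such that the direct sums
`γ'ₙ = γ_{m 1 n} ⊕ ⋯ ⊕ γ_{m n n} : A → B_{m 1 n} ⊕ ⋯ ⊕ B_{m n n}` (the product
with the sup norm) form a cpc discrete asymptotic morphism with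
`limₙ ‖γ'ₙ(a)‖ = ‖a‖` for all `a ∈ A`. -/
theorem stmt_9 {A : Type*} {B : ℕ → Type*} [NonUnitalCStarAlgebra A]
    [∀ n, NonUnitalCStarAlgebra (B n)]
    (a : ℕ → A) (hdense : DenseRange a)
    (γ : ∀ n, A →ₗ[ℂ] B n)
    (hcp : ∀ n, IsCompletelyPositive (γ n))
    (hcontr : ∀ n x, ‖γ n x‖ ≤ ‖x‖)
    (hmult : ∀ x y : A,
      Tendsto (fun n => ‖γ n (x * y) - γ n x * γ n y‖) atTop (𝓝 0))
    (hinj : ∀ x : A, Filter.limsup (fun n => ‖γ n x‖) atTop = ‖x‖) :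
    ∃ m : ℕ → ℕ → ℕ, (∀ i, StrictMono (m i)) ∧
      ∃ γ' : ∀ n, A →ₗ[ℂ] (∀ i : Fin n, B (m i n)),
        (∀ n (x : A) (i : Fin n), γ' n x i = γ (m i n) x) ∧
        (∀ n, IsCompletelyPositive (γ' n)) ∧
        (∀ n x, ‖γ' n x‖ ≤ ‖x‖) ∧
        (∀ x y : A,
          Tendsto (fun n => ‖γ' n (x * y) - γ' n x * γ' n y‖) atTop (𝓝 0)) ∧
        (∀ x : A, Tendsto (fun n => ‖γ' n x‖) atTop (𝓝 ‖x‖)) := by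
  have hcobdd (x : A) : IsCoboundedUnder (· ≤ ·) atTop fun k => ‖γ k x‖ :=
    (isBoundedUnder_of ⟨0, fun k => norm_nonneg _⟩).isCoboundedUnder_le
  choose m hmono hm using fun i => exists_strictMono_lt_comp_of_lt_limsup (hcobdd (a i))
    (ε := fun n : ℕ => ‖a i‖ - 1 / (n + 1 : ℝ)) fun n => by
      rw [hinj]
      exact sub_lt_self _ (by positivity)
  refine ⟨m, hmono, fun n => LinearMap.pi fun i : Fin n => γ (m i n), fun n x i => rfl,
    fun n => .pi fun i => hcp _, fun n => LinearMap.norm_pi_apply_le fun i => hcontr _,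
    fun x y => tendsto_norm_finPi_zero (u := fun k => γ k (x * y) - γ k x * γ k y) (hmult x y)
      fun i => (hmono i).id_le,
    tendsto_norm_pi_apply_of_denseRange hdense hcontr hm⟩
end

section
/- Let A be a C*-algebra containing a nonzero projection p (p² = p = p*). Then there is no sequence of completely positive contractive, asymptotically multiplicative maps ηₙ : A → Bₙ into C*-algebras Bₙ that is both injective (limsupₙ ‖ηₙ(a)‖ = ‖a‖ for all a) and null-homotopic in the naive sense that each ηₙ is connected to 0 through a path t ↦ ηₙ^{(t)} (t ∈ [0,1], ηₙ^{(0)} = 0, ηₙ^{(1)} = ηₙ) which is pointwise norm-continuous and such that the family (a ↦ ηₙ^{(·)}(a)) defines a cpc asymptotically multiplicative sequence A → C([0,1], Bₙ). (Consequently, a C*-algebra with property (QH) has no nonzero projections.) -/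
open Filter Topology

/-- Let `A` be a C*-algebra containing a nonzero projection `p`.  Then there is no
cpc asymptotically multiplicative sequence `(ηₙ : A → Bₙ)` which is both injective
(`limsupₙ ‖ηₙ(a)‖ = ‖a‖` for all `a`) and null-homotopic in the sense that each
`ηₙ` is the endpoint evaluation of a pointwise norm-continuous path
`t ↦ ηₙ^{(t)}` with `ηₙ^{(0)} = 0`, `ηₙ^{(1)} = ηₙ`, where the family
`Hₙ : A → C([0,1], Bₙ)` is itself a cpc asymptotically multiplicative sequence.
(Consequently, a C*-algebra with property (QH) has no nonzero projections.) -/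
theorem stmt_16 {A : Type*} [NonUnitalCStarAlgebra A]
    (p : A) (hp : p ≠ 0) (hidem : IsIdempotentElem p) (hsa : star p = p)
    (B : ℕ → Type*) [∀ n, NonUnitalCStarAlgebra (B n)]
    (H : ∀ n, A →ₗ[ℂ] C(unitInterval, B n))
    (hcp : ∀ n, IsCompletelyPositive (H n))
    (hcontr : ∀ n a, ‖H n a‖ ≤ ‖a‖)
    (hmult : ∀ a b : A,
      Tendsto (fun n => ‖H n (a * b) - H n a * H n b‖) atTop (𝓝 0))
    (hzero : ∀ n (a : A), H n a 0 = 0)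
    (hinj : ∀ a : A,
      Filter.limsup (fun n => ‖(H n a) 1‖) atTop = ‖a‖) :
    False := by
  -- ‖p‖ = 1
  have h0 : ‖p‖ ≠ 0 := norm_ne_zero_iff.mpr hp
  have hpnorm : ‖p‖ = 1 := by
    have h1 : ‖p‖ * ‖p‖ = ‖p‖ := by
      rw [← CStarRing.norm_star_mul_self, hsa, hidem.eq]
    have := mul_right_cancel₀ h0 (by rw [h1, one_mul] : ‖p‖ * ‖p‖ = 1 * ‖p‖)
    exact this
  -- eventually ‖H n p - (H n p)^2‖ < 1/8
  have hm := hmult p p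
  rw [hidem.eq] at hm
  have hev : ∀ᶠ n in atTop, ‖H n p - H n p * H n p‖ < 1/8 :=
    hm.eventually (gt_mem_nhds (by norm_num : (0:ℝ) < 1/8))
  -- frequently ‖H n p 1‖ > 1/2
  have hcob : Filter.IsCoboundedUnder (· ≤ ·) atTop (fun n => ‖(H n p) 1‖) :=
    Filter.isCoboundedUnder_le_of_le atTop (fun n => norm_nonneg _)
  have hfreq : ∃ᶠ n in atTop, (1:ℝ)/2 < ‖(H n p) 1‖ := by
    apply Filter.frequently_lt_of_lt_limsup hcob
    rw [hinj p, hpnorm]; norm_num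
  obtain ⟨n, hn2, hn8⟩ := (hfreq.and_eventually hev).exists
  -- IVT on f t = ‖H n p t‖
  set x : C(unitInterval, B n) := H n p with hx
  have hf : Continuous fun t : unitInterval => ‖x t‖ :=
    (map_continuous x).norm
  have h0' : ‖x 0‖ = 0 := by rw [hx, hzero n p, norm_zero]
  have hIVT : ((1:ℝ)/2) ∈ Set.range fun t : unitInterval => ‖x t‖ := by
    have := intermediate_value_univ (0 : unitInterval) 1 hf
    apply this
    constructor
    · rw [h0']; norm_num
    · exact le_of_lt hn2
  obtain ⟨t, ht⟩ := hIVT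
  -- pointwise estimate
  have hle : ‖x t - x t * x t‖ ≤ ‖x - x * x‖ := by
    have := (x - x * x).norm_coe_le_norm t
    simpa using this
  have hge : ‖x t‖ - ‖x t‖ * ‖x t‖ ≤ ‖x t - x t * x t‖ := by
    have h1 : ‖x t‖ ≤ ‖x t - x t * x t‖ + ‖x t * x t‖ := by
      calc ‖x t‖ = ‖(x t - x t * x t) + x t * x t‖ := by rw [sub_add_cancel]
        _ ≤ ‖x t - x t * x t‖ + ‖x t * x t‖ := norm_add_le _ _
    have h2 : ‖x t * x t‖ ≤ ‖x t‖ * ‖x t‖ := norm_mul_le _ _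
    linarith
  have ht' : ‖x t‖ = 1/2 := ht
  rw [ht'] at hge
  have hxx : ‖x - x * x‖ < 1/8 := by
    have : ‖x - x * x‖ = ‖H n p - H n p * H n p‖ := by rw [hx]
    rw [this]; exact hn8
  norm_num at hge
  linarith
end
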